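/- Let W1 and W2 be B-DMCs with finite output alphabets Y1 and Y2 satisfying W_i(y|0)+W_i(y|1) > 0 for every output y, and let ρ ≥ 0. Then exp(−E0(ρ, W⁻)) = Σ_{y1∈Y1} Σ_{y2∈Y2} q_{W1}(y1) q_{W2}(y2) · g(ρ, |Δ_{W1}(y1)·Δ_{W2}(y2)|), where W⁻ is the minus polar transform of W1 and W2. -/
import Mathlib


open Real

/-- Gallager's `g` function: `g ρ z = ((1/2)(1+z)^{1/(1+ρ)} + (1/2)(1-z)^{1/(1+ρ)})^{1+ρ}`. -/
noncomputable def g (ρ z : ℝ) : ℝ :=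
  ((1/2) * (1 + z) ^ (1/(1+ρ)) + (1/2) * (1 - z) ^ (1/(1+ρ))) ^ (1+ρ)

/-- Gallager's `E0` of a binary-input channel `W` (input `false` is 0, `true` is 1)
under the uniform input distribution. -/
noncomputable def E0 {Y : Type*} [Fintype Y] (ρ : ℝ) (W : Bool → Y → ℝ) : ℝ :=
  - Real.log (∑ y, ((1/2) * (W false y) ^ (1/(1+ρ)) + (1/2) * (W true y) ^ (1/(1+ρ))) ^ (1+ρ))

/-- `q_W(y) = (W(y|0)+W(y|1))/2`. -/
noncomputable def qW {Y : Type*} (W : Bool → Y → ℝ) (y : Y) : ℝ :=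
  (W false y + W true y) / 2

/-- `Δ_W(y) = (W(y|0) - W(y|1))/(W(y|0)+W(y|1))`. -/
noncomputable def ΔW {Y : Type*} (W : Bool → Y → ℝ) (y : Y) : ℝ :=
  (W false y - W true y) / (W false y + W true y)

/-- The minus polar transform of two channels. -/
noncomputable def Wminus {Y1 Y2 : Type*} (W1 : Bool → Y1 → ℝ) (W2 : Bool → Y2 → ℝ) :
    Bool → Y1 × Y2 → ℝ :=
  fun u1 y => ∑ u2 : Bool, (1/2) * W1 (xor u1 u2) y.1 * W2 u2 y.2

/-- The plus polar transform of two channels; output is `(y1, y2, u1)`. -/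
noncomputable def Wplus {Y1 Y2 : Type*} (W1 : Bool → Y1 → ℝ) (W2 : Bool → Y2 → ℝ) :
    Bool → Y1 × Y2 × Bool → ℝ :=
  fun u2 y => (1/2) * W1 (xor y.2.2 u2) y.1 * W2 u2 y.2.1

/-- The function `h(ρ, z1, z2)` from the `W⁺` representation. -/
noncomputable def hfun (ρ z1 z2 : ℝ) : ℝ :=
  (1/2) * (1 + z1*z2) * g ρ ((z1 + z2)/(1 + z1*z2))
    + (1/2) * (1 - z1*z2) * g ρ ((z1 - z2)/(1 - z1*z2))

lemma g_neg (ρ z : ℝ) : g ρ (-z) = g ρ z := by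
  unfold g
  rw [show (1:ℝ) + -z = 1 - z by ring, show (1:ℝ) - -z = 1 + z by ring, add_comm]

lemma g_abs (ρ z : ℝ) : g ρ |z| = g ρ z := by
  rcases abs_cases z with ⟨h, _⟩ | ⟨h, _⟩
  · rw [h]
  · rw [h, g_neg]

lemma abs_ΔW_le_one {Y : Type*} (W : Bool → Y → ℝ) (hn : ∀ x y, 0 ≤ W x y)
    (hp : ∀ y, 0 < W false y + W true y) (y : Y) : |ΔW W y| ≤ 1 := by
  rw [ΔW, abs_div, abs_of_pos (hp y), div_le_one (hp y), abs_le]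
  have := hn false y; have := hn true y
  constructor <;> linarith

lemma g_pos (ρ z : ℝ) (hρ : 0 ≤ ρ) (hz : |z| ≤ 1) : 0 < g ρ z := by
  have h1 : (0:ℝ) < 1 + ρ := by linarith
  obtain ⟨hz1, hz2⟩ := abs_le.mp hz
  apply Real.rpow_pos_of_pos
  have h2 : (0:ℝ) < (1 + z) ^ (1/(1+ρ)) + (1 - z) ^ (1/(1+ρ)) := by
    rcases lt_or_ge z 1 with h | h
    · have := Real.rpow_pos_of_pos (show (0:ℝ) < 1 - z by linarith) (1/(1+ρ))
      have := Real.rpow_nonneg (show (0:ℝ) ≤ 1 + z by linarith) (1/(1+ρ))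
      linarith
    · have := Real.rpow_pos_of_pos (show (0:ℝ) < 1 + z by linarith) (1/(1+ρ))
      have := Real.rpow_nonneg (show (0:ℝ) ≤ 1 - z by linarith) (1/(1+ρ))
      linarith
  linarith

theorem E0_minus_repr {Y1 Y2 : Type*} [Fintype Y1] [Fintype Y2]
    (W1 : Bool → Y1 → ℝ) (W2 : Bool → Y2 → ℝ)
    (hW1_nonneg : ∀ x y, 0 ≤ W1 x y) (hW1_sum : ∀ x, ∑ y, W1 x y = 1)
    (hW1_pos : ∀ y, 0 < W1 false y + W1 true y)
    (hW2_nonneg : ∀ x y, 0 ≤ W2 x y) (hW2_sum : ∀ x, ∑ y, W2 x y = 1)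
    (hW2_pos : ∀ y, 0 < W2 false y + W2 true y)
    (ρ : ℝ) (hρ : 0 ≤ ρ) :
    Real.exp (-(E0 ρ (Wminus W1 W2))) =
      ∑ y1, ∑ y2, qW W1 y1 * qW W2 y2 * g ρ |ΔW W1 y1 * ΔW W2 y2| := by
  have h1 : (0:ℝ) < 1 + ρ := by linarith
  have habs : ∀ (y1 : Y1) (y2 : Y2), |ΔW W1 y1 * ΔW W2 y2| ≤ 1 := by
    intro y1 y2
    rw [abs_mul]
    exact mul_le_one₀ (abs_ΔW_le_one W1 hW1_nonneg hW1_pos y1) (abs_nonneg _)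
      (abs_ΔW_le_one W2 hW2_nonneg hW2_pos y2)
  have key : ∀ (y1 : Y1) (y2 : Y2),
      ((1/2) * (Wminus W1 W2 false (y1,y2)) ^ (1/(1+ρ))
        + (1/2) * (Wminus W1 W2 true (y1,y2)) ^ (1/(1+ρ))) ^ (1+ρ)
      = qW W1 y1 * qW W2 y2 * g ρ |ΔW W1 y1 * ΔW W2 y2| := by
    intro y1 y2
    have hs1 := hW1_pos y1
    have hs2 := hW2_pos y2
    set q := qW W1 y1 * qW W2 y2 with hqdef
    set z := ΔW W1 y1 * ΔW W2 y2 with hzdef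
    have hq : 0 < q := by
      apply mul_pos <;> · rw [qW]; positivity
    have hz : |z| ≤ 1 := habs y1 y2
    obtain ⟨hz1, hz2⟩ := abs_le.mp hz
    have hmf : Wminus W1 W2 false (y1,y2) = q * (1 + z) := by
      simp only [Wminus, Fintype.sum_bool, hqdef, hzdef, qW, ΔW]
      simp only [Bool.xor_false, Bool.xor_true, Bool.not_true, Bool.not_false]
      field_simp
      ring
    have hmt : Wminus W1 W2 true (y1,y2) = q * (1 - z) := by
      simp only [Wminus, Fintype.sum_bool, hqdef, hzdef, qW, ΔW]
      simp only [Bool.xor_false, Bool.xor_true, Bool.not_true, Bool.not_false]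
      field_simp
      ring
    have hpz : (0:ℝ) ≤ 1 + z := by linarith
    have hmz : (0:ℝ) ≤ 1 - z := by linarith
    have hB : (0:ℝ) ≤ (1/2) * (1+z) ^ (1/(1+ρ)) + (1/2) * (1-z) ^ (1/(1+ρ)) := by
      have := Real.rpow_nonneg hpz (1/(1+ρ))
      have := Real.rpow_nonneg hmz (1/(1+ρ))
      linarith
    rw [hmf, hmt, Real.mul_rpow hq.le hpz, Real.mul_rpow hq.le hmz,
      show (1/2) * (q ^ (1/(1+ρ)) * (1+z) ^ (1/(1+ρ)))
          + (1/2) * (q ^ (1/(1+ρ)) * (1-z) ^ (1/(1+ρ)))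
        = q ^ (1/(1+ρ)) * ((1/2) * (1+z) ^ (1/(1+ρ)) + (1/2) * (1-z) ^ (1/(1+ρ))) by ring,
      Real.mul_rpow (Real.rpow_nonneg hq.le _) hB,
      ← Real.rpow_mul hq.le, one_div_mul_cancel (ne_of_gt h1), Real.rpow_one, g_abs]
    rfl
  have hNE1 : Nonempty Y1 := by
    by_contra h
    rw [not_nonempty_iff] at h
    have := hW1_sum false
    simp [Finset.univ_eq_empty] at this
  have hNE2 : Nonempty Y2 := by
    by_contra h
    rw [not_nonempty_iff] at h
    have := hW2_sum false
    simp [Finset.univ_eq_empty] at this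
  have S_pos : 0 < ∑ y1, ∑ y2, qW W1 y1 * qW W2 y2 * g ρ |ΔW W1 y1 * ΔW W2 y2| := by
    apply Finset.sum_pos _ Finset.univ_nonempty
    intro y1 _
    apply Finset.sum_pos _ Finset.univ_nonempty
    intro y2 _
    have hs1 := hW1_pos y1
    have hs2 := hW2_pos y2
    have hq : 0 < qW W1 y1 * qW W2 y2 := by
      apply mul_pos <;> · rw [qW]; positivity
    exact mul_pos hq (g_pos ρ _ hρ (by rw [abs_abs]; exact habs y1 y2))
  have S_eq : (∑ y : Y1 × Y2,
      ((1/2) * (Wminus W1 W2 false y) ^ (1/(1+ρ))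
        + (1/2) * (Wminus W1 W2 true y) ^ (1/(1+ρ))) ^ (1+ρ))
      = ∑ y1, ∑ y2, qW W1 y1 * qW W2 y2 * g ρ |ΔW W1 y1 * ΔW W2 y2| := by
    rw [Fintype.sum_prod_type]
    exact Finset.sum_congr rfl fun y1 _ => Finset.sum_congr rfl fun y2 _ => key y1 y2
  rw [E0, neg_neg, S_eq, Real.exp_log S_pos]
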